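/- arXiv:1810.08720 — 5 statements merged into one kernel-verified Lean document; each statement's English description precedes it below -/
import Mathlib

section
/- In a Busemann space X with base point x0 and constant D > 0, the product (x|y)^D = max{t ∈ [0, min(t_{γx}, t_{γy})] : d(γx(t), γy(t)) ≤ D} satisfies min{(x|y)^D, (y|z)^D} ≤ 2(x|z)^D for all x, y, z ∈ X, where γx denotes the unique geodesic from x0 to x. -/
open Set

/- Along a common parameter `t`, the Busemann inequality for two geodesics issuing from `x0`
says that `t ↦ d(γx t, γy t)` grows at least linearly: shrinking `t` by a factor `c` shrinks the
distance by at least `c`. Hence the geodesics of `x` and `y` stay `D`-close on `[0, (x|y)^D]`.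
If `m = min{(x|y)^D, (y|z)^D}`, the triangle inequality through `γy m` gives
`d(γx m, γz m) ≤ 2D`, and halving the parameter gives `d(γx (m/2), γz (m/2)) ≤ D`,
so `m/2 ≤ (x|z)^D`. -/

section BusemannGeodesics

variable {X : Type*} [MetricSpace X] {x0 : X} {γ : X → ℝ → X}

theorem dist_geodesic_mul_le
    (hstart : ∀ x, γ x 0 = x0)
    (hbusemann : ∀ x y : X, ∀ t ∈ Icc (0:ℝ) (dist x0 x), ∀ s ∈ Icc (0:ℝ) (dist x0 y),
      ∀ c ∈ Icc (0:ℝ) 1,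
        dist (γ x (c * t)) (γ y (c * s)) ≤
          c * dist (γ x t) (γ y s) + (1 - c) * dist (γ x 0) (γ y 0))
    {a b : X} {T c : ℝ} (hT0 : 0 ≤ T) (hT : T ≤ min (dist x0 a) (dist x0 b))
    (hc : c ∈ Icc (0:ℝ) 1) :
    dist (γ a (c * T)) (γ b (c * T)) ≤ c * dist (γ a T) (γ b T) := by
  simpa only [hstart, dist_self, mul_zero, add_zero] using
    hbusemann a b T ⟨hT0, hT.trans (min_le_left _ _)⟩ T ⟨hT0, hT.trans (min_le_right _ _)⟩ c hc

theorem dist_geodesic_le_of_le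
    (hstart : ∀ x, γ x 0 = x0)
    (hbusemann : ∀ x y : X, ∀ t ∈ Icc (0:ℝ) (dist x0 x), ∀ s ∈ Icc (0:ℝ) (dist x0 y),
      ∀ c ∈ Icc (0:ℝ) 1,
        dist (γ x (c * t)) (γ y (c * s)) ≤
          c * dist (γ x t) (γ y s) + (1 - c) * dist (γ x 0) (γ y 0))
    {a b : X} {t T : ℝ} (ht0 : 0 ≤ t) (htT : t ≤ T) (hT : T ≤ min (dist x0 a) (dist x0 b)) :
    dist (γ a t) (γ b t) ≤ dist (γ a T) (γ b T) := by
  have hT0 : 0 ≤ T := ht0.trans htT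
  -- `t / T * T = t` also when `T = 0`, because then `t = 0`.
  have hscale : t / T * T = t := by
    rcases hT0.eq_or_lt with hT0 | hT0
    · rw [← hT0, mul_zero]; exact (le_antisymm (hT0 ▸ htT) ht0).symm
    · exact div_mul_cancel₀ t hT0.ne'
  have hc : t / T ∈ Icc (0:ℝ) 1 := ⟨div_nonneg ht0 hT0, div_le_one_of_le₀ htT hT0⟩
  calc dist (γ a t) (γ b t) ≤ t / T * dist (γ a T) (γ b T) := by
        simpa only [hscale] using dist_geodesic_mul_le hstart hbusemann hT0 hT hc
    _ ≤ dist (γ a T) (γ b T) := mul_le_of_le_one_left dist_nonneg hc.2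

end BusemannGeodesics

theorem stmt_3_general {X : Type*} [MetricSpace X] (x0 : X) (D : ℝ)
    (γ : X → ℝ → X)
    (hstart : ∀ x, γ x 0 = x0)
    (hbusemann : ∀ x y : X, ∀ t ∈ Icc (0:ℝ) (dist x0 x), ∀ s ∈ Icc (0:ℝ) (dist x0 y),
      ∀ c ∈ Icc (0:ℝ) 1,
        dist (γ x (c * t)) (γ y (c * s)) ≤
          c * dist (γ x t) (γ y s) + (1 - c) * dist (γ x 0) (γ y 0))
    (p : X → X → ℝ)
    (hp : ∀ x y, IsGreatest
      {t | t ∈ Icc (0:ℝ) (min (dist x0 x) (dist x0 y)) ∧ dist (γ x t) (γ y t) ≤ D}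
      (p x y)) :
    ∀ x y z : X, min (p x y) (p y z) ≤ 2 * p x z := by
  intro x y z
  obtain ⟨⟨⟨hxy0, hxy_le⟩, hxy⟩, -⟩ := hp x y
  obtain ⟨⟨⟨hyz0, hyz_le⟩, hyz⟩, -⟩ := hp y z
  set m := min (p x y) (p y z)
  have hm0 : 0 ≤ m := le_min hxy0 hyz0
  have hm : m ≤ min (dist x0 x) (dist x0 z) :=
    le_min ((min_le_left _ _).trans (hxy_le.trans (min_le_left _ _)))
      ((min_le_right _ _).trans (hyz_le.trans (min_le_right _ _)))
  have h2D : dist (γ x m) (γ z m) ≤ 2 * D := by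
    calc dist (γ x m) (γ z m) ≤ dist (γ x m) (γ y m) + dist (γ y m) (γ z m) :=
          dist_triangle _ _ _
      _ ≤ D + D := add_le_add
          ((dist_geodesic_le_of_le hstart hbusemann hm0 (min_le_left _ _) hxy_le).trans hxy)
          ((dist_geodesic_le_of_le hstart hbusemann hm0 (min_le_right _ _) hyz_le).trans hyz)
      _ = 2 * D := by ring
  have hhalf : dist (γ x (1/2 * m)) (γ z (1/2 * m)) ≤ D := by
    calc dist (γ x (1/2 * m)) (γ z (1/2 * m)) ≤ 1/2 * dist (γ x m) (γ z m) :=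
          dist_geodesic_mul_le hstart hbusemann hm0 hm ⟨by norm_num, by norm_num⟩
      _ ≤ D := by linarith
  have hhalf_le : 1/2 * m ≤ min (dist x0 x) (dist x0 z) := (by linarith : 1/2 * m ≤ m).trans hm
  have := (hp x z).2 ⟨⟨by positivity, hhalf_le⟩, hhalf⟩
  linarith

/-- In a Busemann space with base point `x0` (where `γ x` is the unique geodesic from
`x0` to `x`, parametrized on `[0, d(x0,x)]`) and a constant `D > 0`, the product
`(x|y)^D = max{t ∈ [0, min(t_{γx},t_{γy})] : d(γx(t),γy(t)) ≤ D}` satisfies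
`min{(x|y)^D, (y|z)^D} ≤ 2 (x|z)^D`. -/
theorem stmt_3 {X : Type*} [MetricSpace X] (x0 : X) (D : ℝ) (hD : 0 < D)
    (γ : X → ℝ → X)
    (hstart : ∀ x, γ x 0 = x0)
    (hend : ∀ x, γ x (dist x0 x) = x)
    (hiso : ∀ x, ∀ s ∈ Icc (0:ℝ) (dist x0 x), ∀ t ∈ Icc (0:ℝ) (dist x0 x),
      dist (γ x s) (γ x t) = |s - t|)
    (hbusemann : ∀ x y : X, ∀ t ∈ Icc (0:ℝ) (dist x0 x), ∀ s ∈ Icc (0:ℝ) (dist x0 y),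
      ∀ c ∈ Icc (0:ℝ) 1,
        dist (γ x (c * t)) (γ y (c * s)) ≤
          c * dist (γ x t) (γ y s) + (1 - c) * dist (γ x 0) (γ y 0))
    (p : X → X → ℝ)
    (hp : ∀ x y, IsGreatest
      {t | t ∈ Icc (0:ℝ) (min (dist x0 x) (dist x0 y)) ∧ dist (γ x t) (γ y t) ≤ D}
      (p x y)) :
    ∀ x y z : X, min (p x y) (p y z) ≤ 2 * p x z :=
  stmt_3_general x0 D γ hstart hbusemann p hp
end

section
/- In a Busemann space X with base point x0 and constant D > 0, the product (x|y)^D satisfies d(x0,x) ≤ (x|y)^D + (2/D)·(x|y)^D·d(x,y) + d(x,y) for all x, y ∈ X. -/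
/-!
Put `T = min (d x0 x) (d x0 y)`. The Busemann inequality with endpoints `x`, `y`, combined with
the unit-speed comparison along the longer geodesic, gives `d(γx(cT), γy(cT)) ≤ 2c·d(x,y)` for
`c ∈ [0,1]`. Taking `c = 1` if `2·d(x,y) ≤ D` and `c = D / (2·d(x,y))` otherwise puts `cT` in the
set whose maximum is `(x|y)^D`, so `T ≤ (x|y)^D + (2/D)·(x|y)^D·d(x,y)`; finally
`d(x0,x) ≤ T + d(x,y)` by the triangle inequality.
-/

open Set

lemma dist_le_min_dist_add_dist {X : Type*} [PseudoMetricSpace X] (x0 x y : X) :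
    dist x0 x ≤ min (dist x0 x) (dist x0 y) + dist x y := by
  have := dist_triangle_right x0 x y
  rcases min_cases (dist x0 x) (dist x0 y) with ⟨h, -⟩ | ⟨h, -⟩ <;> rw [h] <;>
    linarith [dist_nonneg (x := x) (y := y)]

lemma le_add_of_isGreatest_sublevel {f : ℝ → ℝ} {T d D p : ℝ} (hD : 0 < D) (hT : 0 ≤ T)
    (hd : 0 ≤ d) (hf : ∀ c ∈ Icc (0:ℝ) 1, f (c * T) ≤ 2 * c * d)
    (hp : IsGreatest {t | t ∈ Icc 0 T ∧ f t ≤ D} p) :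
    T ≤ p + 2 / D * p * d := by
  have hp0 : 0 ≤ p := hp.1.1.1
  rcases le_or_gt (2 * d) D with hsmall | hlarge
  · have hf1 := hf 1 ⟨zero_le_one, le_rfl⟩
    simp only [one_mul, mul_one] at hf1
    have hTp : T ≤ p := hp.2 ⟨⟨hT, le_rfl⟩, hf1.trans hsmall⟩
    have : 0 ≤ 2 / D * p * d := by positivity
    linarith
  · have hd0 : 0 < d := by linarith
    set c := D / (2 * d) with hc
    have hc0 : 0 < c := by positivity
    have hc1 : c ≤ 1 := (div_le_one (by positivity)).2 hlarge.le
    have hcd : 2 * c * d = D := by rw [hc]; field_simp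
    have hcTp : c * T ≤ p :=
      hp.2 ⟨⟨by positivity, mul_le_of_le_one_left hT hc1⟩, hcd ▸ hf c ⟨hc0.le, hc1⟩⟩
    have hT' : T ≤ 2 / D * p * d := by
      rw [div_mul_eq_mul_div, div_mul_eq_mul_div, le_div_iff₀ hD]
      nlinarith
    linarith

section GeodesicBundle

variable {X : Type*} [MetricSpace X] {x0 : X} {γ : X → ℝ → X}

lemma dist_geodesic_mul_le_mul_dist (hstart : ∀ x, γ x 0 = x0)
    (hend : ∀ x, γ x (dist x0 x) = x)
    (hbusemann : ∀ x y : X, ∀ t ∈ Icc (0:ℝ) (dist x0 x), ∀ s ∈ Icc (0:ℝ) (dist x0 y),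
      ∀ c ∈ Icc (0:ℝ) 1,
        dist (γ x (c * t)) (γ y (c * s)) ≤
          c * dist (γ x t) (γ y s) + (1 - c) * dist (γ x 0) (γ y 0))
    (x y : X) {c : ℝ} (hc : c ∈ Icc (0:ℝ) 1) :
    dist (γ x (c * dist x0 x)) (γ y (c * dist x0 y)) ≤ c * dist x y := by
  simpa [hstart, hend] using
    hbusemann x y _ ⟨dist_nonneg, le_rfl⟩ _ ⟨dist_nonneg, le_rfl⟩ c hc

/-- Moving along `γ y` from parameter `c·d(x0,y)` back to `c·d(x0,x)` costs
`c·(d(x0,y) - d(x0,x)) ≤ c·d(x,y)`. -/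
lemma dist_geodesic_mul_le_two_mul_dist_of_le (hstart : ∀ x, γ x 0 = x0)
    (hend : ∀ x, γ x (dist x0 x) = x)
    (hiso : ∀ x, ∀ s ∈ Icc (0:ℝ) (dist x0 x), ∀ t ∈ Icc (0:ℝ) (dist x0 x),
      dist (γ x s) (γ x t) = |s - t|)
    (hbusemann : ∀ x y : X, ∀ t ∈ Icc (0:ℝ) (dist x0 x), ∀ s ∈ Icc (0:ℝ) (dist x0 y),
      ∀ c ∈ Icc (0:ℝ) 1,
        dist (γ x (c * t)) (γ y (c * s)) ≤
          c * dist (γ x t) (γ y s) + (1 - c) * dist (γ x 0) (γ y 0))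
    {x y : X} (hxy : dist x0 x ≤ dist x0 y) {c : ℝ} (hc : c ∈ Icc (0:ℝ) 1) :
    dist (γ x (c * dist x0 x)) (γ y (c * dist x0 x)) ≤ 2 * c * dist x y := by
  obtain ⟨hc0, hc1⟩ := hc
  have hx0 : 0 ≤ dist x0 x := dist_nonneg
  have hmem {a : ℝ} (ha : 0 ≤ a) (hay : a ≤ dist x0 y) : c * a ∈ Icc 0 (dist x0 y) :=
    ⟨by positivity, (mul_le_of_le_one_left ha hc1).trans hay⟩
  have hmove : dist (γ y (c * dist x0 y)) (γ y (c * dist x0 x)) ≤ c * dist x y := by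
    rw [hiso y _ (hmem dist_nonneg le_rfl) _ (hmem hx0 hxy), ← mul_sub,
      abs_of_nonneg (mul_nonneg hc0 (sub_nonneg.2 hxy))]
    exact mul_le_mul_of_nonneg_left (by linarith [dist_triangle x0 x y]) hc0
  calc dist (γ x (c * dist x0 x)) (γ y (c * dist x0 x))
      ≤ dist (γ x (c * dist x0 x)) (γ y (c * dist x0 y))
        + dist (γ y (c * dist x0 y)) (γ y (c * dist x0 x)) := dist_triangle _ _ _
    _ ≤ c * dist x y + c * dist x y :=
        add_le_add (dist_geodesic_mul_le_mul_dist hstart hend hbusemann x y ⟨hc0, hc1⟩) hmove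
    _ = 2 * c * dist x y := by ring

lemma dist_geodesic_mul_min_le_two_mul_dist (hstart : ∀ x, γ x 0 = x0)
    (hend : ∀ x, γ x (dist x0 x) = x)
    (hiso : ∀ x, ∀ s ∈ Icc (0:ℝ) (dist x0 x), ∀ t ∈ Icc (0:ℝ) (dist x0 x),
      dist (γ x s) (γ x t) = |s - t|)
    (hbusemann : ∀ x y : X, ∀ t ∈ Icc (0:ℝ) (dist x0 x), ∀ s ∈ Icc (0:ℝ) (dist x0 y),
      ∀ c ∈ Icc (0:ℝ) 1,
        dist (γ x (c * t)) (γ y (c * s)) ≤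
          c * dist (γ x t) (γ y s) + (1 - c) * dist (γ x 0) (γ y 0))
    (x y : X) {c : ℝ} (hc : c ∈ Icc (0:ℝ) 1) :
    dist (γ x (c * min (dist x0 x) (dist x0 y))) (γ y (c * min (dist x0 x) (dist x0 y)))
      ≤ 2 * c * dist x y := by
  rcases le_total (dist x0 x) (dist x0 y) with hxy | hyx
  · rw [min_eq_left hxy]
    exact dist_geodesic_mul_le_two_mul_dist_of_le hstart hend hiso hbusemann hxy hc
  · rw [min_eq_right hyx, dist_comm, dist_comm x]
    exact dist_geodesic_mul_le_two_mul_dist_of_le hstart hend hiso hbusemann hyx hc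

end GeodesicBundle

/-- In a Busemann space with base point `x0` and constant `D > 0`, the product
`(x|y)^D` satisfies `d(x0,x) ≤ (x|y)^D + (2/D)·(x|y)^D·d(x,y) + d(x,y)`. -/
theorem stmt_4 {X : Type*} [MetricSpace X] (x0 : X) (D : ℝ) (hD : 0 < D)
    (γ : X → ℝ → X)
    (hstart : ∀ x, γ x 0 = x0)
    (hend : ∀ x, γ x (dist x0 x) = x)
    (hiso : ∀ x, ∀ s ∈ Icc (0:ℝ) (dist x0 x), ∀ t ∈ Icc (0:ℝ) (dist x0 x),
      dist (γ x s) (γ x t) = |s - t|)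
    (hbusemann : ∀ x y : X, ∀ t ∈ Icc (0:ℝ) (dist x0 x), ∀ s ∈ Icc (0:ℝ) (dist x0 y),
      ∀ c ∈ Icc (0:ℝ) 1,
        dist (γ x (c * t)) (γ y (c * s)) ≤
          c * dist (γ x t) (γ y s) + (1 - c) * dist (γ x 0) (γ y 0))
    (p : X → X → ℝ)
    (hp : ∀ x y, IsGreatest
      {t | t ∈ Icc (0:ℝ) (min (dist x0 x) (dist x0 y)) ∧ dist (γ x t) (γ y t) ≤ D}
      (p x y)) :
    ∀ x y : X, dist x0 x ≤ p x y + (2 / D) * p x y * dist x y + dist x y := by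
  intro x y
  have hmin : min (dist x0 x) (dist x0 y) ≤ p x y + 2 / D * p x y * dist x y :=
    le_add_of_isGreatest_sublevel hD (le_min dist_nonneg dist_nonneg) dist_nonneg
      (fun _ hc => dist_geodesic_mul_min_le_two_mul_dist hstart hend hiso hbusemann x y hc)
      (hp x y)
  linarith [dist_le_min_dist_add_dist x0 x y]
end

section
/- The space X = {(0,0)} ∪ ℕ² with metric d(x1,x2) = |n1 - n2| if m1 = m2, and n1 + n2 otherwise, is 0-hyperbolic: the Gromov product at x0 = (0,0) satisfies min{(x|y)_{x0}, (y|z)_{x0}} ≤ (x|z)_{x0} for all x, y, z ∈ X. -/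
/-- The space `X = {(0,0)} ∪ ℕ≥1 × ℕ≥1`. -/
def Xpt : Type := {q : ℕ × ℕ // q = (0, 0) ∨ (1 ≤ q.1 ∧ 1 ≤ q.2)}

/-- `d((m1,n1),(m2,n2)) = |n1 - n2|` if `m1 = m2` and `n1 + n2` otherwise. -/
noncomputable def dX (a b : Xpt) : ℝ :=
  if a.1.1 = b.1.1 then |(a.1.2 : ℝ) - (b.1.2 : ℝ)| else (a.1.2 : ℝ) + (b.1.2 : ℝ)

/-- The Gromov product at `x0 = (0,0)` on `X`. -/
noncomputable def gpX (a b : Xpt) : ℝ :=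
  (dX ⟨(0, 0), Or.inl rfl⟩ a + dX ⟨(0, 0), Or.inl rfl⟩ b - dX a b) / 2

/-!
`X` is a star of rays `{m} × ℕ≥1` glued at the origin, i.e. a tree. The Gromov product of two
points at the origin is the length of their common path from the origin: the smaller height if
they lie on the same ray, and `0` otherwise. Being on the same ray is an equivalence relation,
and the minimum of heights is associative, which gives the ultrametric inequality.
-/

section StarProduct

variable {α β R : Type*} [DecidableEq β] [LinearOrder R] [Zero R]

/-- The Gromov product at the centre of a star whose rays are the fibres of `ray`. -/
def starProduct (ray : α → β) (height : α → R) (a b : α) : R :=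
  if ray a = ray b then min (height a) (height b) else 0

theorem starProduct_nonneg {ray : α → β} {height : α → R} (h0 : ∀ a, 0 ≤ height a) (a b : α) :
    0 ≤ starProduct ray height a b := by
  unfold starProduct
  split_ifs
  exacts [le_min (h0 a) (h0 b), le_rfl]

theorem min_starProduct_le {ray : α → β} {height : α → R} (h0 : ∀ a, 0 ≤ height a)
    (a b c : α) :
    min (starProduct ray height a b) (starProduct ray height b c) ≤
      starProduct ray height a c := by
  by_cases hab : ray a = ray b
  · by_cases hbc : ray b = ray c
    · simp only [starProduct, if_pos hab, if_pos hbc, if_pos (hab.trans hbc)]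
      exact le_min ((min_le_left _ _).trans (min_le_left _ _))
        ((min_le_right _ _).trans (min_le_right _ _))
    · calc min (starProduct ray height a b) (starProduct ray height b c)
          ≤ starProduct ray height b c := min_le_right _ _
        _ = 0 := if_neg hbc
        _ ≤ starProduct ray height a c := starProduct_nonneg h0 a c
  · calc min (starProduct ray height a b) (starProduct ray height b c)
        ≤ starProduct ray height a b := min_le_left _ _
      _ = 0 := if_neg hab
      _ ≤ starProduct ray height a c := starProduct_nonneg h0 a c

end StarProduct

theorem dX_origin (a : Xpt) : dX ⟨(0, 0), Or.inl rfl⟩ a = a.1.2 := by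
  unfold dX
  rcases a.2 with h | h
  · simp [h]
  · rw [if_neg (by simpa using (Nat.one_pos.trans_le h.1).ne), Nat.cast_zero, zero_add]

theorem gpX_eq_starProduct (a b : Xpt) :
    gpX a b = starProduct (fun q : Xpt => q.1.1) (fun q : Xpt => (q.1.2 : ℝ)) a b := by
  unfold gpX starProduct
  rw [dX_origin, dX_origin]
  unfold dX
  split_ifs
  · rw [min_def]
    split_ifs with hle
    · rw [abs_of_nonpos (sub_nonpos.mpr hle)]; ring
    · rw [abs_of_pos (sub_pos.mpr (not_le.mp hle))]; ring
  · ring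

/-- `X = {(0,0)} ∪ ℕ²` with the metric `dX` is `0`-hyperbolic:
`min{(x|y),(y|z)} ≤ (x|z)` for the Gromov product at `x0 = (0,0)`. -/
theorem stmt_11 :
    ∀ x y z : Xpt, min (gpX x y) (gpX y z) ≤ gpX x z := by
  intro x y z
  simpa only [gpX_eq_starProduct] using
    min_starProduct_le (fun q : Xpt => Nat.cast_nonneg q.1.2) x y z
end

section
/- Let (X,d) be a metric space with a pre-controlled product and extend (·|·) to X̄ = X ∪ ∂X by (x|y) = inf{liminf_{i→∞}(x_i|y_i) : (x_i) ∈ x, (y_i) ∈ y}. Then there exists a non-decreasing function ρ̄1: ℝ≥0 ∪ {∞} → ℝ≥0 ∪ {∞} with ρ̄1(ℝ≥0) ⊆ ℝ≥0, ρ̄1(∞) = ∞, and min{(x|y), (y|z)} ≤ ρ̄1((x|z)) for all x, y, z ∈ X̄; in fact ρ̄1(t) = ρ1(t+1) works, where ρ1 witnesses (CP1). -/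
open Filter

/-- A pre-controlled product on a metric space `X` at `x0`: a nonnegative symmetric
function satisfying (CP1)-(CP3) with witnessing non-decreasing functions. -/
structure PreCP (X : Type*) [MetricSpace X] (x0 : X) where
  p : X → X → ℝ
  nonneg : ∀ x y, 0 ≤ p x y
  symm : ∀ x y, p x y = p y x
  ρ1 : ℝ → ℝ
  ρ1_mono : Monotone ρ1
  cp1 : ∀ x y z, min (p x y) (p y z) ≤ ρ1 (p x z)
  ρ2 : ℝ → ℝ
  ρ2_mono : Monotone ρ2
  cp2 : ∀ x y, p x y ≤ ρ2 (dist x0 x)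
  ρ3 : ℝ → ℝ → ℝ
  ρ3_mono : ∀ s1 s2 t1 t2 : ℝ, s1 ≤ s2 → t1 ≤ t2 → ρ3 s1 t1 ≤ ρ3 s2 t2
  cp3 : ∀ x y, dist x0 x ≤ ρ3 (p x y) (dist x y)

variable {X : Type*} [MetricSpace X] {x0 : X}

/-- `S_∞(X)`: sequences with `(x_i|x_j) → ∞` as `i,j → ∞`. -/
def PreCP.Sinf (P : PreCP X x0) (u : ℕ → X) : Prop :=
  ∀ R : ℝ, ∃ N, ∀ i ≥ N, ∀ j ≥ N, R < P.p (u i) (u j)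

/-- The relation `(x_i) ∼ (y_i) ⟺ (x_i|y_i) → ∞` on `S_∞(X)`. -/
def PreCP.SeqRel (P : PreCP X x0) (u v : {u : ℕ → X // P.Sinf u}) : Prop :=
  Tendsto (fun i => P.p (u.1 i) (v.1 i)) atTop atTop

/-- The Gromov boundary `∂X = S_∞(X)/∼`. -/
def PreCP.Boundary (P : PreCP X x0) : Type _ := Quot P.SeqRel

/-- `u` represents a point of `X̄ = X ⊕ ∂X`: for a point of `X`, `u` is the constant
sequence; for a boundary point, `u` is a representative of the class. -/
def PreCP.Represents (P : PreCP X x0) (u : ℕ → X) : X ⊕ P.Boundary → Prop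
  | Sum.inl x => ∀ i, u i = x
  | Sum.inr b => ∃ h : P.Sinf u, Quot.mk P.SeqRel ⟨u, h⟩ = b

/-- The extension of the pre-controlled product to `X̄ = X ⊕ ∂X`, with values in
`ℝ≥0 ∪ {∞}` (as `EReal`): `(x|y) = inf {liminf_i (x_i|y_i) : (x_i) ∈ x, (y_i) ∈ y}`. -/
noncomputable def PreCP.extProd (P : PreCP X x0) (a b : X ⊕ P.Boundary) : EReal :=
  sInf {L : EReal | ∃ u v : ℕ → X, P.Represents u a ∧ P.Represents v b ∧
    L = liminf (fun i => ((P.p (u i) (v i) : ℝ) : EReal)) atTop}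

/-!
If `(x|z) < r` for a real `r`, pick representatives `(x_i)`, `(z_i)` with
`liminf (x_i|z_i) < r` and any representative `(y_i)` of `y`. Were both
`(x|y)` and `(y|z)` larger than `ρ1 r`, then for some index `i` we would have
`(x_i|y_i), (y_i|z_i) > ρ1 r` and `(x_i|z_i) < r`, contradicting (CP1).
Taking `r = (x|z) + 1` gives `ρ̄1(t) = ρ1(t + 1)`, clipped at `0` and extended by `ρ̄1(∞) = ∞`.
-/

/-- `max 0 t.toReal` keeps the argument monotone in `t` at `⊥` and on negative reals,
where `toReal` alone is not. -/
noncomputable def EReal.shiftExtend (f : ℝ → ℝ) (t : EReal) : EReal :=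
  if t = ⊤ then ⊤ else ((max 0 (f (max 0 t.toReal + 1)) : ℝ) : EReal)

namespace EReal

variable {f : ℝ → ℝ}

@[simp]
theorem shiftExtend_top : shiftExtend f ⊤ = ⊤ := if_pos rfl

theorem shiftExtend_coe (t : ℝ) :
    shiftExtend f t = ((max 0 (f (max 0 t + 1)) : ℝ) : EReal) := by
  simp [shiftExtend]

theorem monotone_shiftExtend (hf : Monotone f) : Monotone (shiftExtend f) := by
  intro s t hst
  by_cases ht : t = ⊤
  · simp [ht]
  have hs : s ≠ ⊤ := ne_top_of_le_ne_top ht hst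
  simp only [shiftExtend, if_neg hs, if_neg ht, EReal.coe_le_coe_iff]
  refine max_le_max le_rfl (hf (add_le_add_left ?_ 1))
  rcases eq_or_ne s ⊥ with rfl | hs'
  · simp
  · exact max_le_max le_rfl (EReal.toReal_le_toReal hst hs' ht)

end EReal

namespace PreCP

variable (P : PreCP X x0)

theorem exists_represents (a : X ⊕ P.Boundary) : ∃ u : ℕ → X, P.Represents u a := by
  rcases a with x | b
  · exact ⟨fun _ => x, fun _ => rfl⟩
  · obtain ⟨⟨u, hu⟩, rfl⟩ := Quot.exists_rep b
    exact ⟨u, hu, rfl⟩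

theorem extProd_le_liminf {u v : ℕ → X} {a b : X ⊕ P.Boundary}
    (hu : P.Represents u a) (hv : P.Represents v b) :
    P.extProd a b ≤ liminf (fun i => ((P.p (u i) (v i) : ℝ) : EReal)) atTop :=
  sInf_le ⟨u, v, hu, hv, rfl⟩

theorem extProd_nonneg (a b : X ⊕ P.Boundary) : 0 ≤ P.extProd a b := by
  refine le_sInf ?_
  rintro L ⟨u, v, -, -, rfl⟩
  exact le_liminf_of_le (by isBoundedDefault)
    (Eventually.of_forall fun i => EReal.coe_nonneg.mpr (P.nonneg _ _))

theorem min_liminf_le (u v w : ℕ → X) {r : ℝ}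
    (h : liminf (fun i => ((P.p (u i) (w i) : ℝ) : EReal)) atTop < r) :
    min (liminf (fun i => ((P.p (u i) (v i) : ℝ) : EReal)) atTop)
      (liminf (fun i => ((P.p (v i) (w i) : ℝ) : EReal)) atTop) ≤ (P.ρ1 r : EReal) := by
  by_contra! hlt
  rw [lt_min_iff] at hlt
  have huw : ∃ᶠ i in atTop, ((P.p (u i) (w i) : ℝ) : EReal) < r :=
    frequently_lt_of_liminf_lt (by isBoundedDefault) h
  obtain ⟨i, ⟨huv, hvw⟩, huw⟩ :=
    ((eventually_lt_of_lt_liminf hlt.1).and (eventually_lt_of_lt_liminf hlt.2)).and_frequently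
      huw |>.exists
  norm_cast at huv hvw huw
  exact (lt_min huv hvw).not_ge ((P.cp1 _ _ _).trans (P.ρ1_mono huw.le))

theorem min_extProd_le_of_extProd_lt {a c : X ⊕ P.Boundary} {r : ℝ} (h : P.extProd a c < r)
    (b : X ⊕ P.Boundary) : min (P.extProd a b) (P.extProd b c) ≤ (P.ρ1 r : EReal) := by
  obtain ⟨_, ⟨u, w, hu, hw, rfl⟩, huw⟩ := sInf_lt_iff.mp h
  obtain ⟨v, hv⟩ := P.exists_represents b
  exact (min_le_min (P.extProd_le_liminf hu hv) (P.extProd_le_liminf hv hw)).trans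
    (P.min_liminf_le u v w huw)

end PreCP

/-- There is a non-decreasing `ρ̄1 : ℝ≥0 ∪ {∞} → ℝ≥0 ∪ {∞}` with `ρ̄1(ℝ≥0) ⊆ ℝ≥0`,
`ρ̄1(∞) = ∞`, and `min{(x|y),(y|z)} ≤ ρ̄1((x|z))` for all `x, y, z ∈ X̄`. -/
theorem stmt_14 (P : PreCP X x0) :
    ∃ ρ : EReal → EReal, Monotone ρ ∧ ρ ⊤ = ⊤ ∧
      (∀ t : ℝ, 0 ≤ t → ∃ s : ℝ, 0 ≤ s ∧ ρ (t : EReal) = (s : EReal)) ∧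
      ∀ a b c : X ⊕ P.Boundary,
        min (P.extProd a b) (P.extProd b c) ≤ ρ (P.extProd a c) := by
  refine ⟨EReal.shiftExtend P.ρ1, EReal.monotone_shiftExtend P.ρ1_mono,
    EReal.shiftExtend_top, fun t _ => ⟨_, le_max_left _ _, EReal.shiftExtend_coe t⟩, ?_⟩
  intro a b c
  by_cases htop : P.extProd a c = ⊤
  · simp [htop]
  have hbot : P.extProd a c ≠ ⊥ := ne_bot_of_le_ne_bot EReal.zero_ne_bot (P.extProd_nonneg a c)
  obtain ⟨t, ht⟩ : ∃ t : ℝ, P.extProd a c = t := ⟨_, (EReal.coe_toReal htop hbot).symm⟩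
  have ht0 : 0 ≤ t := by exact_mod_cast ht ▸ P.extProd_nonneg a c
  rw [ht, EReal.shiftExtend_coe, max_eq_right ht0]
  have hlt : P.extProd a c < ((t + 1 : ℝ) : EReal) := by rw [ht]; exact_mod_cast lt_add_one t
  exact (P.min_extProd_le_of_extProd_lt hlt b).trans (by exact_mod_cast le_max_right _ _)
end

section
/- Let X be a (λ,k,E,C,θ,𝓛)-coarsely convex space with base point x0 and let D, D' both be at least max{C+1, λθ(0)+k} with D' ≤ D. Then (x|y)^D ≤ ED·(x|y)^{D'} for all x, y ∈ X; consequently (·|·)^D and (·|·)^{D'} are coarsely equivalent. -/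
open Set

/-!
Shrinking a pair of `D`-close segments from `x0` by the factor `c = (D' - C)/(E D)`, convexity
makes them `D'`-close at time `c t` whenever they are `D`-close at time `t`, because both start
at `x0`. Hence every time counted in `(x|y)^D` is at most `E D / (D' - C) ≤ E D` times one counted
in `(x|y)^{D'}`; with `(x|y)^{D'} ≤ (x|y)^D` this gives the coarse equivalence via
`ρ₋ t = t / (E D)` and `ρ₊ = id`. The regularity bound `t_γ ≤ θ(d(x0, x))` makes the suprema finite.
-/

section CloseTimes

variable {X : Type*} [MetricSpace X] (L : Set ((ℝ → X) × ℝ)) (x0 : X)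

/-- The set whose supremum is `(x|y)^D`. -/
def closeTimes (D : ℝ) (x y : X) : Set ℝ :=
  {t | ∃ g ∈ L, ∃ h ∈ L, g.1 0 = x0 ∧ h.1 0 = x0 ∧ g.1 g.2 = x ∧ h.1 h.2 = y ∧
    t ∈ Icc (0:ℝ) (min g.2 h.2) ∧ dist (g.1 t) (h.1 t) ≤ D}

variable {L x0}

theorem closeTimes_mono {D D' : ℝ} (hDD' : D' ≤ D) (x y : X) :
    closeTimes L x0 D' x y ⊆ closeTimes L x0 D x y := by
  rintro t ⟨g, hg, h, hh, hg0, hh0, hgx, hhy, ht, hdist⟩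
  exact ⟨g, hg, h, hh, hg0, hh0, hgx, hhy, ht, hdist.trans hDD'⟩

theorem nonneg_of_mem_closeTimes {D t : ℝ} {x y : X} (ht : t ∈ closeTimes L x0 D x y) :
    0 ≤ t := by
  obtain ⟨_, _, _, _, _, _, _, _, hIcc, _⟩ := ht
  exact hIcc.1

theorem bddAbove_closeTimes {θ : ℝ → ℝ}
    (hreg : ∀ g ∈ L, ∀ h ∈ L, ∀ t ∈ Icc (0:ℝ) g.2, ∀ s ∈ Icc (0:ℝ) h.2,
      |t - s| ≤ θ (dist (g.1 0) (h.1 0) + dist (g.1 t) (h.1 s)))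
    (D : ℝ) (x y : X) : BddAbove (closeTimes L x0 D x y) := by
  refine ⟨θ (dist x x0), ?_⟩
  rintro t ⟨g, hg, _, _, hg0, _, hgx, _, ⟨ht0, htm⟩, _⟩
  have htg : t ≤ g.2 := htm.trans (min_le_left _ _)
  have hg2 : 0 ≤ g.2 := ht0.trans htg
  have hlen := hreg g hg g hg g.2 ⟨hg2, le_rfl⟩ 0 ⟨le_rfl, hg2⟩
  rw [sub_zero, abs_of_nonneg hg2, dist_self, zero_add, hgx, hg0] at hlen
  exact htg.trans hlen

theorem mul_mem_closeTimes {E C D c t : ℝ} (hE : 0 ≤ E)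
    (hconv : ∀ g ∈ L, ∀ h ∈ L, ∀ t ∈ Icc (0:ℝ) g.2, ∀ s ∈ Icc (0:ℝ) h.2,
      ∀ c ∈ Icc (0:ℝ) 1,
      dist (g.1 (c * t)) (h.1 (c * s)) ≤
        c * E * dist (g.1 t) (h.1 s) + (1 - c) * E * dist (g.1 0) (h.1 0) + C)
    (hc : c ∈ Icc (0:ℝ) 1) {x y : X} (ht : t ∈ closeTimes L x0 D x y) :
    c * t ∈ closeTimes L x0 (c * E * D + C) x y := by
  obtain ⟨g, hg, h, hh, hg0, hh0, hgx, hhy, ⟨ht0, htm⟩, hdist⟩ := ht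
  refine ⟨g, hg, h, hh, hg0, hh0, hgx, hhy,
    ⟨mul_nonneg hc.1 ht0, (mul_le_of_le_one_left ht0 hc.2).trans htm⟩, ?_⟩
  have hcv := hconv g hg h hh t ⟨ht0, htm.trans (min_le_left _ _)⟩
    t ⟨ht0, htm.trans (min_le_right _ _)⟩ c hc
  rw [hg0, hh0, dist_self, mul_zero, add_zero] at hcv
  calc dist (g.1 (c * t)) (h.1 (c * t)) ≤ c * E * dist (g.1 t) (h.1 t) + C := hcv
    _ ≤ c * E * D + C := by gcongr; exact mul_nonneg hc.1 hE

theorem sSup_closeTimes_nonneg (D : ℝ) (x y : X) : 0 ≤ sSup (closeTimes L x0 D x y) :=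
  Real.sSup_nonneg fun _ ht => nonneg_of_mem_closeTimes ht

theorem sSup_closeTimes_mono {D D' : ℝ} {x y : X} (hbdd : BddAbove (closeTimes L x0 D x y))
    (hDD' : D' ≤ D) : sSup (closeTimes L x0 D' x y) ≤ sSup (closeTimes L x0 D x y) :=
  Real.sSup_le (fun _ ht => le_csSup hbdd (closeTimes_mono hDD' x y ht))
    (sSup_closeTimes_nonneg D x y)

theorem sSup_closeTimes_le_mul {E C D D' : ℝ} (hE : 0 ≤ E)
    (hconv : ∀ g ∈ L, ∀ h ∈ L, ∀ t ∈ Icc (0:ℝ) g.2, ∀ s ∈ Icc (0:ℝ) h.2,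
      ∀ c ∈ Icc (0:ℝ) 1,
      dist (g.1 (c * t)) (h.1 (c * s)) ≤
        c * E * dist (g.1 t) (h.1 s) + (1 - c) * E * dist (g.1 0) (h.1 0) + C)
    {x y : X} (hbdd : BddAbove (closeTimes L x0 D' x y)) (hCD' : C + 1 ≤ D')
    (hD'ED : D' - C ≤ E * D) :
    sSup (closeTimes L x0 D x y) ≤ E * D * sSup (closeTimes L x0 D' x y) := by
  have hED : 0 < E * D := by linarith
  refine Real.sSup_le (fun t ht => ?_) (mul_nonneg hED.le (sSup_closeTimes_nonneg D' x y))
  set c := (D' - C) / (E * D)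
  have hcED : c * (E * D) = D' - C := div_mul_cancel₀ _ hED.ne'
  have hc : c ∈ Icc (0:ℝ) 1 := ⟨div_nonneg (by linarith) hED.le, (div_le_one hED).2 hD'ED⟩
  have hmem : c * t ∈ closeTimes L x0 D' x y := by
    have hshrunk := mul_mem_closeTimes hE hconv hc ht
    rwa [mul_assoc c E D, hcED, sub_add_cancel] at hshrunk
  calc t ≤ (D' - C) * t := le_mul_of_one_le_left (nonneg_of_mem_closeTimes ht) (by linarith)
    _ = E * D * (c * t) := by rw [← hcED]; ring
    _ ≤ E * D * sSup (closeTimes L x0 D' x y) := by gcongr; exact le_csSup hbdd hmem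

end CloseTimes

theorem stmt_19_general {X : Type*} [MetricSpace X] (x0 : X)
    (lam k E C : ℝ) (hE : 1 ≤ E) (hC : 0 ≤ C)
    (θ : ℝ → ℝ)
    (L : Set ((ℝ → X) × ℝ))
    (hconv : ∀ g ∈ L, ∀ h ∈ L, ∀ t ∈ Icc (0:ℝ) g.2, ∀ s ∈ Icc (0:ℝ) h.2,
      ∀ c ∈ Icc (0:ℝ) 1,
      dist (g.1 (c * t)) (h.1 (c * s)) ≤
        c * E * dist (g.1 t) (h.1 s) + (1 - c) * E * dist (g.1 0) (h.1 0) + C)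
    (hreg : ∀ g ∈ L, ∀ h ∈ L, ∀ t ∈ Icc (0:ℝ) g.2, ∀ s ∈ Icc (0:ℝ) h.2,
      |t - s| ≤ θ (dist (g.1 0) (h.1 0) + dist (g.1 t) (h.1 s)))
    (D D' : ℝ)
    (hD' : max (C + 1) (lam * θ 0 + k) ≤ D') (hDD' : D' ≤ D)
    (pD pD' : X → X → ℝ)
    (hpD : ∀ x y, pD x y = sSup {t | ∃ g ∈ L, ∃ h ∈ L, g.1 0 = x0 ∧ h.1 0 = x0 ∧
      g.1 g.2 = x ∧ h.1 h.2 = y ∧ t ∈ Icc (0:ℝ) (min g.2 h.2) ∧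
      dist (g.1 t) (h.1 t) ≤ D})
    (hpD' : ∀ x y, pD' x y = sSup {t | ∃ g ∈ L, ∃ h ∈ L, g.1 0 = x0 ∧ h.1 0 = x0 ∧
      g.1 g.2 = x ∧ h.1 h.2 = y ∧ t ∈ Icc (0:ℝ) (min g.2 h.2) ∧
      dist (g.1 t) (h.1 t) ≤ D'}) :
    (∀ x y : X, pD x y ≤ E * D * pD' x y) ∧
    (∃ ρm ρp : ℝ → ℝ, Monotone ρm ∧ Monotone ρp ∧
      Filter.Tendsto ρm Filter.atTop Filter.atTop ∧
      ∀ x y : X, ρm (pD x y) ≤ pD' x y ∧ pD' x y ≤ ρp (pD x y)) := by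
  obtain rfl : pD = fun x y => sSup (closeTimes L x0 D x y) := funext₂ hpD
  obtain rfl : pD' = fun x y => sSup (closeTimes L x0 D' x y) := funext₂ hpD'
  have hCD' : C + 1 ≤ D' := (le_max_left _ _).trans hD'
  have hED : 0 < E * D := by nlinarith
  have hbdd := bddAbove_closeTimes (x0 := x0) hreg
  have hmain : ∀ x y, sSup (closeTimes L x0 D x y) ≤ E * D * sSup (closeTimes L x0 D' x y) :=
    fun x y => sSup_closeTimes_le_mul (by linarith) hconv (hbdd D' x y) hCD' (by nlinarith)
  refine ⟨hmain, fun t => t / (E * D), id, fun _ _ hab => div_le_div_of_nonneg_right hab hED.le,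
    monotone_id, Filter.tendsto_id.atTop_div_const hED,
    fun x y => ⟨?_, sSup_closeTimes_mono (hbdd D x y) hDD'⟩⟩
  rw [div_le_iff₀ hED, mul_comm]
  exact hmain x y

/-- In a `(λ,k,E,C,θ,𝓛)`-coarsely convex space with base point `x0` and
`max{C+1, λθ(0)+k} ≤ D' ≤ D`, the products satisfy `(x|y)^D ≤ ED·(x|y)^{D'}`;
consequently `(·|·)^D` and `(·|·)^{D'}` are coarsely equivalent. -/
theorem stmt_19 {X : Type*} [MetricSpace X] (x0 : X)
    (lam k E C : ℝ) (hlam : 1 ≤ lam) (hk : 0 ≤ k) (hE : 1 ≤ E) (hC : 0 ≤ C)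
    (θ : ℝ → ℝ) (hθ : Monotone θ) (hθnn : ∀ t : ℝ, 0 ≤ t → 0 ≤ θ t)
    (L : Set ((ℝ → X) × ℝ))
    (hQG : ∀ g ∈ L, 0 ≤ g.2 ∧ ∀ s ∈ Icc (0:ℝ) g.2, ∀ t ∈ Icc (0:ℝ) g.2,
      (1 / lam) * |t - s| - k ≤ dist (g.1 s) (g.1 t) ∧
        dist (g.1 s) (g.1 t) ≤ lam * |t - s| + k)
    (hconn : ∀ x y : X, ∃ g ∈ L, g.1 0 = x ∧ g.1 g.2 = y)
    (hconv : ∀ g ∈ L, ∀ h ∈ L, ∀ t ∈ Icc (0:ℝ) g.2, ∀ s ∈ Icc (0:ℝ) h.2,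
      ∀ c ∈ Icc (0:ℝ) 1,
      dist (g.1 (c * t)) (h.1 (c * s)) ≤
        c * E * dist (g.1 t) (h.1 s) + (1 - c) * E * dist (g.1 0) (h.1 0) + C)
    (hreg : ∀ g ∈ L, ∀ h ∈ L, ∀ t ∈ Icc (0:ℝ) g.2, ∀ s ∈ Icc (0:ℝ) h.2,
      |t - s| ≤ θ (dist (g.1 0) (h.1 0) + dist (g.1 t) (h.1 s)))
    (D D' : ℝ) (hD : max (C + 1) (lam * θ 0 + k) ≤ D)
    (hD' : max (C + 1) (lam * θ 0 + k) ≤ D') (hDD' : D' ≤ D)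
    (pD pD' : X → X → ℝ)
    (hpD : ∀ x y, pD x y = sSup {t | ∃ g ∈ L, ∃ h ∈ L, g.1 0 = x0 ∧ h.1 0 = x0 ∧
      g.1 g.2 = x ∧ h.1 h.2 = y ∧ t ∈ Icc (0:ℝ) (min g.2 h.2) ∧
      dist (g.1 t) (h.1 t) ≤ D})
    (hpD' : ∀ x y, pD' x y = sSup {t | ∃ g ∈ L, ∃ h ∈ L, g.1 0 = x0 ∧ h.1 0 = x0 ∧
      g.1 g.2 = x ∧ h.1 h.2 = y ∧ t ∈ Icc (0:ℝ) (min g.2 h.2) ∧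
      dist (g.1 t) (h.1 t) ≤ D'}) :
    (∀ x y : X, pD x y ≤ E * D * pD' x y) ∧
    (∃ ρm ρp : ℝ → ℝ, Monotone ρm ∧ Monotone ρp ∧
      Filter.Tendsto ρm Filter.atTop Filter.atTop ∧
      ∀ x y : X, ρm (pD x y) ≤ pD' x y ∧ pD' x y ≤ ρp (pD x y)) :=
  stmt_19_general x0 lam k E C hE hC θ L hconv hreg D D' hD' hDD' pD pD' hpD hpD'
end
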